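/- For a non-crossing partition p of {1,…,k} ⊔ {1,…,l}, the fattened diagram p̃ (obtained by doubling each point and taking the outline of each block) is a non-crossing perfect matching of {1,…,2k} ⊔ {1,…,2l}, and the map p ↦ p̃ is injective. Moreover ∑_{b ∈ bl(p)} |b| = k + l and p̃ has exactly k + l pairs. -/
import Mathlib


open Classical

/-- A set partition of a set of points linearly positioned by `pos` is non-crossing
if there are no points `a, b, c, d` in increasing position with `a ~ c`, `b ~ d`
but `a ≁ b`. -/
def IsNonCrossingOn {ι : Type*} (pos : ι → ℕ) (p : Setoid ι) : Prop :=
  ∀ a b c d : ι, pos a < pos b → pos b < pos c → pos c < pos d → p a c → p b d → p a b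

/-- A setoid is a perfect matching (pairing) if every class has exactly two elements. -/
def IsPairing {ι : Type*} (p : Setoid ι) : Prop :=
  ∀ x : ι, Nat.card {y : ι // p x y} = 2

/-- The outline relation defining the fattening of a partition `p` on points positioned
by `pos`: each point `x` is doubled into `(x, false)` (first copy) and `(x, true)`
(second copy); the second copy of `x` is paired with the first copy of the successor of
`x` inside its block, and the first copy of the minimum of a block is paired with the
second copy of its maximum. -/
def outlineRel {ι : Type*} (pos : ι → ℕ) (p : Setoid ι) :
    ι × Bool → ι × Bool → Prop :=
  fun x y =>
    (x.2 = true ∧ y.2 = false ∧ p x.1 y.1 ∧ pos x.1 < pos y.1 ∧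
      ∀ z, p x.1 z → ¬(pos x.1 < pos z ∧ pos z < pos y.1)) ∨
    (x.2 = false ∧ y.2 = true ∧ p x.1 y.1 ∧
      (∀ z, p x.1 z → pos x.1 ≤ pos z) ∧ (∀ z, p y.1 z → pos z ≤ pos y.1))

/-- The fattening (outline) of a partition: the pairing of the doubled points generated
by the outline relation. -/
noncomputable def fatten {ι : Type*} (pos : ι → ℕ) (p : Setoid ι) : Setoid (ι × Bool) :=
  Relation.EqvGen.setoid (outlineRel pos p)

/-- Position of the doubled points: the two copies of `x` sit at `2·pos x` and
`2·pos x + 1`. -/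
def dpos {ι : Type*} (pos : ι → ℕ) : ι × Bool → ℕ :=
  fun x => 2 * pos x.1 + (if x.2 then 1 else 0)

/-- The linear position of the points of a two-row diagram with `k` upper and `l` lower
points: upper points are traversed left to right, lower points right to left. -/
def rowPos (k l : ℕ) : Fin k ⊕ Fin l → ℕ :=
  Sum.elim (fun i => (i : ℕ)) (fun j => k + (l - 1 - (j : ℕ)))

/-- Gluing the lower row of `p` to the upper row of `q`: the equivalence relation on
all points generated by the blocks of `p` and of `q`. -/
noncomputable def glue {A B C : Type*} (p : Setoid (A ⊕ B)) (q : Setoid (B ⊕ C)) :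
    Setoid (A ⊕ (B ⊕ C)) :=
  Relation.EqvGen.setoid (fun x y =>
    (∃ a b, p a b ∧ x = Sum.map id Sum.inl a ∧ y = Sum.map id Sum.inl b) ∨
    (∃ a b, q a b ∧ x = Sum.inr a ∧ y = Sum.inr b))

/-- The composite partition `q·p` on the outer points: two outer points are in the same
block iff they are connected through blocks of `p` and `q` via the middle points. -/
noncomputable def partComp {A B C : Type*} (q : Setoid (B ⊕ C)) (p : Setoid (A ⊕ B)) :
    Setoid (A ⊕ C) :=
  Setoid.comap (Sum.map id Sum.inr) (glue p q)

/-- The number of connected components of the glued diagram consisting only of middle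
points (the blocks removed, or loops closed, in the composition). -/
noncomputable def closedBlocks {A B C : Type*} (q : Setoid (B ⊕ C)) (p : Setoid (A ⊕ B)) : ℕ :=
  Nat.card {c : Quotient (glue p q) //
    ∀ x, Quotient.mk (glue p q) x = c → ∃ b : B, x = Sum.inr (Sum.inl b)}


set_option linter.unusedSectionVars false

section FattenHelpers

variable {ι : Type*} [Finite ι] {pos : ι → ℕ} {p : Setoid ι}

/-- successor within a block -/
def succRelAux (pos : ι → ℕ) (p : Setoid ι) (x y : ι) : Prop :=
  p x y ∧ pos x < pos y ∧ ∀ z, p x z → ¬(pos x < pos z ∧ pos z < pos y)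

lemma exists_blockMin (x : ι) : ∃ m, p x m ∧ ∀ z, p x z → pos m ≤ pos z := by
  obtain ⟨m, hm, hmin⟩ := Set.exists_min_image {z | p x z} pos (Set.toFinite _) ⟨x, p.refl x⟩
  exact ⟨m, hm, fun z hz => hmin z hz⟩

lemma exists_blockMax (x : ι) : ∃ m, p x m ∧ ∀ z, p x z → pos z ≤ pos m := by
  obtain ⟨m, hm, hmax⟩ := Set.exists_max_image {z | p x z} pos (Set.toFinite _) ⟨x, p.refl x⟩
  exact ⟨m, hm, fun z hz => hmax z hz⟩

lemma exists_succ (x : ι) (h : ∃ w, p x w ∧ pos x < pos w) : ∃ y, succRelAux pos p x y := by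
  obtain ⟨y, ⟨hy1, hy2⟩, hmin⟩ := Set.exists_min_image {z | p x z ∧ pos x < pos z} pos
    (Set.toFinite _) ⟨h.choose, h.choose_spec⟩
  exact ⟨y, hy1, hy2, fun z hz hc => absurd (hmin z ⟨hz, hc.1⟩) (not_le.mpr hc.2)⟩

lemma exists_pred (x : ι) (h : ∃ w, p x w ∧ pos w < pos x) : ∃ y, succRelAux pos p y x := by
  obtain ⟨y, ⟨hy1, hy2⟩, hmax⟩ := Set.exists_max_image {z | p x z ∧ pos z < pos x} pos
    (Set.toFinite _) ⟨h.choose, h.choose_spec⟩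
  refine ⟨y, p.symm hy1, hy2, fun z hz hc => ?_⟩
  exact absurd (hmax z ⟨p.trans hy1 hz, hc.2⟩) (not_le.mpr hc.1)

lemma outlineRel_dpos_lt {a b : ι × Bool} (h : outlineRel pos p a b) :
    dpos pos a < dpos pos b := by
  rcases h with ⟨h1, h2, _, hlt, _⟩ | ⟨h1, h2, hab, hmin, _⟩
  · simp only [dpos, h1, h2]; simp; omega
  · have : pos a.1 ≤ pos b.1 := hmin b.1 hab
    simp only [dpos, h1, h2]; simp; omega

lemma outlineRel_ne {a b : ι × Bool} (h : outlineRel pos p a b) : a ≠ b :=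
  fun he => absurd (he ▸ outlineRel_dpos_lt h) (lt_irrefl _)

variable (hpos : Function.Injective pos)
include hpos

lemma succ_unique {x y y' : ι} (h : succRelAux pos p x y) (h' : succRelAux pos p x y') :
    y = y' := by
  rcases lt_trichotomy (pos y) (pos y') with hc | hc | hc
  · exact (h'.2.2 y h.1 ⟨h.2.1, hc⟩).elim
  · exact hpos hc
  · exact (h.2.2 y' h'.1 ⟨h'.2.1, hc⟩).elim

lemma pred_unique {x y y' : ι} (h : succRelAux pos p y x) (h' : succRelAux pos p y' x) :
    y = y' := by
  rcases lt_trichotomy (pos y) (pos y') with hc | hc | hc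
  · exact (h.2.2 y' (p.trans h.1 (p.symm h'.1)) ⟨hc, h'.2.1⟩).elim
  · exact hpos hc
  · exact (h'.2.2 y (p.trans h'.1 (p.symm h.1)) ⟨hc, h.2.1⟩).elim

/-- uniqueness of the partner of a node -/
lemma partner_unique {n a b : ι × Bool}
    (ha : outlineRel pos p n a ∨ outlineRel pos p a n)
    (hb : outlineRel pos p n b ∨ outlineRel pos p b n) : a = b := by
  have key : ∀ u v : ι × Bool, outlineRel pos p n u → outlineRel pos p v n → False := by
    intro u v hu hv
    rcases hu with ⟨hn2, hu2, hpu, hlt, hsucc⟩ | ⟨hn2, hu2, hpu, hminn, hmaxu⟩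
    · -- n.2 = true, so hv must be clause 2 (v.2 = false, n.2 = true): n is a max
      rcases hv with ⟨hv2, hn2', _⟩ | ⟨hv2, hn2', hpv, hminv, hmaxn⟩
      · rw [hn2] at hn2'; exact Bool.noConfusion hn2'
      · exact absurd (hmaxn u.1 hpu) (not_le.mpr hlt)
    · -- n.2 = false; hv must be clause 1: succRel v.1 n.1, i.e. pos v.1 < pos n.1
      rcases hv with ⟨hv2, hn2', hpv, hlt, _⟩ | ⟨hv2, hn2', _⟩
      · exact absurd (hminn v.1 (p.symm hpv)) (not_le.mpr hlt)
      · rw [hn2] at hn2'; exact Bool.noConfusion hn2'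
  rcases ha with ha | ha <;> rcases hb with hb | hb
  · -- both outgoing
    rcases ha with ⟨hn2, ha2, hpa, hlta, hsucca⟩ | ⟨hn2, ha2, hpa, hmina, hmaxa⟩
    · rcases hb with ⟨hn2', hb2, hpb, hltb, hsuccb⟩ | ⟨hn2', hb2, _⟩
      · have : a.1 = b.1 := succ_unique hpos ⟨hpa, hlta, hsucca⟩ ⟨hpb, hltb, hsuccb⟩
        exact Prod.ext this (by rw [ha2, hb2])
      · rw [hn2] at hn2'; exact Bool.noConfusion hn2'
    · rcases hb with ⟨hn2', hb2, _⟩ | ⟨hn2', hb2, hpb, hminb, hmaxb⟩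
      · rw [hn2] at hn2'; exact Bool.noConfusion hn2'
      · -- a.1 and b.1 are both maxes of the block of n.1
        have h1 : pos a.1 ≤ pos b.1 := hmaxb a.1 (p.trans (p.symm hpb) hpa)
        have h2 : pos b.1 ≤ pos a.1 := hmaxa b.1 (p.trans (p.symm hpa) hpb)
        exact Prod.ext (hpos (le_antisymm h1 h2)) (by rw [ha2, hb2])
  · exact (key a b ha hb).elim
  · exact (key b a hb ha).elim
  · -- both incoming
    rcases ha with ⟨ha2, hn2, hpa, hlta, hsucca⟩ | ⟨ha2, hn2, hpa, hmina, hmaxa⟩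
    · rcases hb with ⟨hb2, hn2', hpb, hltb, hsuccb⟩ | ⟨hb2, hn2', _⟩
      · have : a.1 = b.1 := pred_unique hpos ⟨hpa, hlta, hsucca⟩ ⟨hpb, hltb, hsuccb⟩
        exact Prod.ext this (by rw [ha2, hb2])
      · rw [hn2] at hn2'; exact Bool.noConfusion hn2'
    · rcases hb with ⟨hb2, hn2', _⟩ | ⟨hb2, hn2', hpb, hminb, hmaxb⟩
      · rw [hn2] at hn2'; exact Bool.noConfusion hn2'
      · have h1 : pos a.1 ≤ pos b.1 := hmina b.1 (p.trans hpa (p.symm hpb))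
        have h2 : pos b.1 ≤ pos a.1 := hminb a.1 (p.trans hpb (p.symm hpa))
        exact Prod.ext (hpos (le_antisymm h1 h2)) (by rw [ha2, hb2])

omit hpos in
/-- existence of a partner -/
lemma partner_exists (n : ι × Bool) :
    ∃ m, outlineRel pos p n m ∨ outlineRel pos p m n := by
  rcases n with ⟨x, b⟩
  cases b with
  | true =>
    by_cases hx : ∀ z, p x z → pos z ≤ pos x
    · obtain ⟨μ, hμ, hμmin⟩ := exists_blockMin (pos := pos) x
      refine ⟨(μ, false), Or.inr (Or.inr ⟨rfl, rfl, p.symm hμ, ?_, hx⟩)⟩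
      exact fun z hz => hμmin z (p.trans hμ hz)
    · push_neg at hx
      obtain ⟨w, hw1, hw2⟩ := hx
      obtain ⟨y, hy⟩ := exists_succ (pos := pos) x ⟨w, hw1, hw2⟩
      exact ⟨(y, false), Or.inl (Or.inl ⟨rfl, rfl, hy.1, hy.2.1, hy.2.2⟩)⟩
  | false =>
    by_cases hx : ∀ z, p x z → pos x ≤ pos z
    · obtain ⟨M, hM, hMmax⟩ := exists_blockMax (pos := pos) x
      refine ⟨(M, true), Or.inl (Or.inr ⟨rfl, rfl, hM, hx, ?_⟩)⟩
      exact fun z hz => hMmax z (p.trans hM hz)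
    · push_neg at hx
      obtain ⟨w, hw1, hw2⟩ := hx
      obtain ⟨y, hy⟩ := exists_pred (pos := pos) x ⟨w, hw1, hw2⟩
      exact ⟨(y, true), Or.inr (Or.inl ⟨rfl, rfl, hy.1, hy.2.1, hy.2.2⟩)⟩

lemma fatten_iff (n m : ι × Bool) :
    (fatten pos p) n m ↔ (n = m ∨ outlineRel pos p n m ∨ outlineRel pos p m n) := by
  constructor
  · intro h
    have h' : Relation.EqvGen (outlineRel pos p) n m := h
    clear h
    induction h' with
    | rel a b hab => exact Or.inr (Or.inl hab)
    | refl a => exact Or.inl rfl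
    | symm a b _ ih =>
      rcases ih with h | h | h
      · exact Or.inl h.symm
      · exact Or.inr (Or.inr h)
      · exact Or.inr (Or.inl h)
    | trans a b c _ _ ih1 ih2 =>
      rcases ih1 with h1 | h1
      · exact h1 ▸ ih2
      · rcases ih2 with h2 | h2
        · exact h2 ▸ Or.inr h1
        · -- a and c are both partners of b
          have : a = c := partner_unique hpos
            (by rcases h1 with h | h; exact Or.inr h; exact Or.inl h)
            (by exact h2)
          exact Or.inl this
  · intro h
    rcases h with h | h | h
    · exact h ▸ (fatten pos p).refl n
    · exact Relation.EqvGen.rel _ _ h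
    · exact (fatten pos p).symm (Relation.EqvGen.rel _ _ h)

lemma fatten_isPairing : IsPairing (fatten pos p) := by
  intro n
  obtain ⟨m₀, hm₀⟩ := partner_exists (pos := pos) (p := p) n
  have hne : n ≠ m₀ := by
    rcases hm₀ with h | h
    · exact outlineRel_ne h
    · exact (outlineRel_ne h).symm
  have hset : {y | (fatten pos p) n y} = {n, m₀} := by
    ext y
    simp only [Set.mem_setOf_eq, Set.mem_insert_iff, Set.mem_singleton_iff]
    rw [fatten_iff hpos]
    constructor
    · rintro (h | h)
      · exact Or.inl h.symm
      · exact Or.inr (partner_unique hpos h hm₀)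
    · rintro (h | h)
      · exact Or.inl h.symm
      · exact h ▸ Or.inr hm₀
  show Nat.card {y // (fatten pos p) n y} = 2
  have : {y // (fatten pos p) n y} = ↥{y | (fatten pos p) n y} := rfl
  rw [this, hset, Nat.card_coe_set_eq, Set.ncard_pair hne]

end FattenHelpers

section MoreHelpers

variable {ι : Type*} [Finite ι] {pos : ι → ℕ} {p q : Setoid ι}

lemma fatten_noncrossing (hpos : Function.Injective pos) (hp : IsNonCrossingOn pos p) :
    IsNonCrossingOn (dpos pos) (fatten pos p) := by
  intro a b c d h1 h2 h3 hac hbd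
  exfalso
  rw [fatten_iff hpos] at hac hbd
  have hac' : outlineRel pos p a c := by
    rcases hac with h | h | h
    · exact absurd (lt_trans h1 h2) (h ▸ lt_irrefl _)
    · exact h
    · exact absurd (outlineRel_dpos_lt h) (not_lt.mpr (le_of_lt (lt_trans h1 h2)))
  have hbd' : outlineRel pos p b d := by
    rcases hbd with h | h | h
    · exact absurd (lt_trans h2 h3) (h ▸ lt_irrefl _)
    · exact h
    · exact absurd (outlineRel_dpos_lt h) (not_lt.mpr (le_of_lt (lt_trans h2 h3)))
  rcases hac' with ⟨ha2, hc2, hpac, hltac, hsuccac⟩ | ⟨ha2, hc2, hpac, hamin, hcmax⟩ <;>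
    rcases hbd' with ⟨hb2, hd2, hpbd, hltbd, hsuccbd⟩ | ⟨hb2, hd2, hpbd, hbmin, hdmax⟩ <;>
      simp only [dpos, ha2, hb2, hc2, hd2, if_true, if_false] at h1 h2 h3 <;>
      simp only [Bool.false_eq_true, if_true, if_false] at h1 h2 h3
  · -- both succ edges
    have e1 : pos a.1 < pos b.1 := by omega
    have e2 : pos b.1 < pos c.1 := by omega
    have e3 : pos c.1 < pos d.1 := by omega
    exact hsuccac b.1 (hp _ _ _ _ e1 e2 e3 hpac hpbd) ⟨e1, e2⟩
  · -- succ edge and min-max edge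
    have e1 : pos a.1 < pos b.1 := by omega
    have e2 : pos b.1 < pos c.1 := by omega
    have e3 : pos c.1 ≤ pos d.1 := by omega
    rcases eq_or_lt_of_le e3 with he | he
    · have hcd : c.1 = d.1 := hpos he
      have hbc : p b.1 c.1 := by rw [hcd]; exact hpbd
      exact hsuccac b.1 (p.trans hpac (p.symm hbc)) ⟨e1, e2⟩
    · exact hsuccac b.1 (hp _ _ _ _ e1 e2 he hpac hpbd) ⟨e1, e2⟩
  · -- min-max edge and succ edge
    have e1 : pos a.1 ≤ pos b.1 := by omega
    have e2 : pos b.1 < pos c.1 := by omega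
    have e3 : pos c.1 < pos d.1 := by omega
    rcases eq_or_lt_of_le e1 with he | he
    · have hab : a.1 = b.1 := hpos he
      have hcd : p c.1 d.1 := p.trans (p.symm hpac) (by rw [hab]; exact hpbd)
      exact absurd (hcmax d.1 hcd) (not_le.mpr e3)
    · have hab : p a.1 b.1 := hp _ _ _ _ he e2 e3 hpac hpbd
      have hcd : p c.1 d.1 := p.trans (p.symm hpac) (p.trans hab hpbd)
      exact absurd (hcmax d.1 hcd) (not_le.mpr e3)
  · -- both min-max edges
    have e1 : pos a.1 < pos b.1 := by omega
    have e2 : pos b.1 ≤ pos c.1 := by omega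
    have e3 : pos c.1 < pos d.1 := by omega
    rcases eq_or_lt_of_le e2 with he | he
    · have hbc : b.1 = c.1 := hpos he
      have hcd : p c.1 d.1 := by rw [← hbc]; exact hpbd
      exact absurd (hcmax d.1 hcd) (not_le.mpr e3)
    · have hab : p a.1 b.1 := hp _ _ _ _ e1 he e3 hpac hpbd
      have hcd : p c.1 d.1 := p.trans (p.symm hpac) (p.trans hab hpbd)
      exact absurd (hcmax d.1 hcd) (not_le.mpr e3)

lemma p_iff_eqvGen_succ (hpos : Function.Injective pos) (x y : ι) :
    p x y ↔ Relation.EqvGen (succRelAux pos p) x y := by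
  constructor
  · intro hxy
    have key : ∀ N x y, p x y → pos x ≤ pos y → pos y - pos x ≤ N →
        Relation.EqvGen (succRelAux pos p) x y := by
      intro N
      induction N with
      | zero =>
        intro x y hxy hle hN
        have : pos x = pos y := by omega
        rw [hpos this]
        exact Relation.EqvGen.refl y
      | succ n ih =>
        intro x y hxy hle hN
        rcases eq_or_lt_of_le hle with he | he
        · rw [hpos he]; exact Relation.EqvGen.refl y
        · obtain ⟨z, hz⟩ := exists_pred (pos := pos) y ⟨x, p.symm hxy, he⟩
          have hxz : p x z := p.trans hxy (p.symm hz.1)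
          have hxlez : pos x ≤ pos z := by
            by_contra hc
            push_neg at hc
            exact hz.2.2 x (p.symm hxz) ⟨hc, he⟩
          have hzy : pos z < pos y := hz.2.1
          exact Relation.EqvGen.trans _ _ _ (ih x z hxz hxlez (by omega))
            (Relation.EqvGen.rel z y hz)
    rcases le_total (pos x) (pos y) with hle | hle
    · exact key _ x y hxy hle le_rfl
    · exact Relation.EqvGen.symm _ _ (key _ y x (p.symm hxy) hle le_rfl)
  · intro h
    induction h with
    | rel a b hab => exact hab.1
    | refl a => exact p.refl a
    | symm a b _ ih => exact p.symm ih
    | trans a b c _ _ ih1 ih2 => exact p.trans ih1 ih2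

lemma succRelAux_iff_outlineRel (x y : ι) :
    succRelAux pos p x y ↔ outlineRel pos p (x, true) (y, false) := by
  constructor
  · intro h
    exact Or.inl ⟨rfl, rfl, h.1, h.2.1, h.2.2⟩
  · rintro (⟨_, _, h1, h2, h3⟩ | ⟨h, _⟩)
    · exact ⟨h1, h2, h3⟩
    · exact Bool.noConfusion h

lemma outlineRel_iff_fatten (hpos : Function.Injective pos) (n m : ι × Bool) :
    outlineRel pos p n m ↔ ((fatten pos p) n m ∧ dpos pos n < dpos pos m) := by
  constructor
  · intro h
    exact ⟨Relation.EqvGen.rel _ _ h, outlineRel_dpos_lt h⟩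
  · rintro ⟨h, hlt⟩
    rw [fatten_iff hpos] at h
    rcases h with h | h | h
    · exact absurd hlt (h ▸ lt_irrefl _)
    · exact h
    · exact absurd hlt (not_lt.mpr (le_of_lt (outlineRel_dpos_lt h)))

lemma fatten_injective (hpos : Function.Injective pos)
    (h : fatten pos p = fatten pos q) : p = q := by
  have hsucc : succRelAux pos p = succRelAux pos q := by
    funext x y
    rw [eq_iff_iff, succRelAux_iff_outlineRel, succRelAux_iff_outlineRel,
      outlineRel_iff_fatten hpos, outlineRel_iff_fatten hpos, h]
  apply Setoid.ext
  intro x y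
  rw [p_iff_eqvGen_succ hpos, p_iff_eqvGen_succ hpos, hsucc]

lemma card_sum_fibers {α β : Type*} [Finite α] [Finite β] (f : α → β) :
    (∑ᶠ c : β, Nat.card {x // f x = c}) = Nat.card α := by
  have := Fintype.ofFinite α
  have := Fintype.ofFinite β
  classical
  rw [finsum_eq_sum_of_fintype, Nat.card_eq_fintype_card,
    ← Fintype.card_congr (Equiv.sigmaFiberEquiv f), Fintype.card_sigma]
  exact Finset.sum_congr rfl fun c _ => Nat.card_eq_fintype_card

lemma fatten_fiber_card (hpos : Function.Injective pos)
    (c : Quotient (fatten pos p)) :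
    Nat.card {n : ι × Bool // Quotient.mk (fatten pos p) n = c} = 2 := by
  obtain ⟨n₀, rfl⟩ := Quotient.exists_rep c
  have he : ∀ n : ι × Bool,
      Quotient.mk (fatten pos p) n = Quotient.mk (fatten pos p) n₀ ↔ (fatten pos p) n₀ n := by
    intro n
    rw [Quotient.eq]
    exact ⟨fun h => (fatten pos p).symm h, fun h => (fatten pos p).symm h⟩
  rw [Nat.card_congr (Equiv.subtypeEquivRight he)]
  exact fatten_isPairing hpos n₀

lemma fatten_quot_card (hpos : Function.Injective pos) :
    2 * Nat.card (Quotient (fatten pos p)) = Nat.card (ι × Bool) := by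
  have hQ : Finite (Quotient (fatten pos p)) := inferInstance
  have key := card_sum_fibers (Quotient.mk (fatten pos p))
  rw [finsum_congr (fatten_fiber_card hpos)] at key
  have := Fintype.ofFinite (Quotient (fatten pos p))
  rw [finsum_eq_sum_of_fintype, Finset.sum_const, smul_eq_mul, Finset.card_univ,
    ← Nat.card_eq_fintype_card] at key
  omega

lemma rowPos_injective (k l : ℕ) : Function.Injective (rowPos k l) := by
  intro a b h
  rcases a with i | i <;> rcases b with j | j <;> simp only [rowPos, Sum.elim_inl, Sum.elim_inr] at h
  · exact congrArg Sum.inl (Fin.ext h)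
  · have := i.isLt; omega
  · have := j.isLt; omega
  · have h1 := i.isLt
    have h2 := j.isLt
    exact congrArg Sum.inr (Fin.ext (by omega))

end MoreHelpers

/-- for a non-crossing partition `p` of `k` upper and `l` lower points,
the fattened diagram `p̃` is a non-crossing perfect matching of the doubled
(`2k` upper, `2l` lower) points, the map `p ↦ p̃` is injective on non-crossing
partitions, the block sizes of `p` sum to `k + l`, and `p̃` has exactly `k + l` pairs. -/
theorem fatten_noncrossing_pairing (k l : ℕ) :
    (∀ p : Setoid (Fin k ⊕ Fin l), IsNonCrossingOn (rowPos k l) p →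
      IsPairing (fatten (rowPos k l) p) ∧
      IsNonCrossingOn (dpos (rowPos k l)) (fatten (rowPos k l) p) ∧
      (∑ᶠ c : Quotient p, Nat.card {x : Fin k ⊕ Fin l // Quotient.mk p x = c}) = k + l ∧
      Nat.card (Quotient (fatten (rowPos k l) p)) = k + l) ∧
    (∀ p q : Setoid (Fin k ⊕ Fin l), IsNonCrossingOn (rowPos k l) p →
      IsNonCrossingOn (rowPos k l) q →
      fatten (rowPos k l) p = fatten (rowPos k l) q → p = q) := by
  have hpos := rowPos_injective k l
  constructor
  · intro p hp
    refine ⟨fatten_isPairing hpos, fatten_noncrossing hpos hp, ?_, ?_⟩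
    · rw [card_sum_fibers (Quotient.mk p)]
      simp [Nat.card_eq_fintype_card]
    · have h1 := fatten_quot_card (p := p) hpos
      have h2 : Nat.card ((Fin k ⊕ Fin l) × Bool) = 2 * (k + l) := by
        simp [Nat.card_eq_fintype_card]
        ring
      omega
  · intro p q hp hq h
    exact fatten_injective hpos h
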